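/- Let q and k be positive integers and let A_1, …, A_k ⊆ Z_q be sets with |A_i| = α_i·q and α_i > 0 for each i. Suppose that the least prime factor of q is greater than 2·(α_1⋯α_k)^{-1} + 3. Then there exists a set X ⊆ Z_q with |X| ≤ (α_1⋯α_k)^{-1} + 1 such that X·(⋂_{i=1}^k (A_i − A_i)) = Z_q, i.e., every element g ∈ Z_q can be written as g = x·d with x ∈ X and d ∈ ⋂_{i=1}^k (A_i − A_i). -/

import Mathlib

/-! With `P = ∏ αᵢ` and `N = ⌊P⁻¹⌋`, the `N + 1` translates `A₁ × ⋯ × A_k + j • (g, …, g)`,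
`0 ≤ j ≤ N`, of a subset of `Z_qᵏ` of density `P` cannot be pairwise disjoint, so some
`1 ≤ m ≤ N` has `m g ∈ ⋂ (Aᵢ - Aᵢ)`. As `N < minFac q`, each such `m` is a unit mod `q`,
and `X = {m⁻¹ : 1 ≤ m ≤ N}` works. -/

open Finset
open scoped Pointwise

theorem exists_nsmul_mem_sub_of_card_lt {G : Type*} [AddCommGroup G] [Fintype G] [DecidableEq G]
    (B : Finset G) (g : G) {N : ℕ} (hN : Fintype.card G < (N + 1) * #B) :
    ∃ m ∈ Icc 1 N, m • g ∈ B - B := by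
  have hlt : #(univ : Finset G) < #(range (N + 1) ×ˢ B) := by
    simpa [card_product] using hN
  obtain ⟨⟨j, b⟩, hjb, ⟨j', b'⟩, hjb', hne, heq⟩ :=
    exists_ne_map_eq_of_card_lt_of_maps_to hlt (f := fun p : ℕ × G => p.2 + p.1 • g)
      (fun _ _ => mem_coe.2 (mem_univ _))
  simp only [mem_product, mem_range] at hjb hjb'
  have hjj' : j ≠ j' := by
    rintro rfl
    exact hne (by simpa using heq)
  wlog hlt : j < j' generalizing j j' b b'
  · exact this j' b' j b hne.symm heq.symm hjb' hjb hjj'.symm (by omega)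
  refine ⟨j' - j, mem_Icc.2 ⟨by omega, by omega⟩, mem_sub.2 ⟨b, hjb.2, b', hjb'.2, ?_⟩⟩
  replace heq : b + j • g = b' + ((j' - j) • g + j • g) := by
    rwa [← add_nsmul, Nat.sub_add_cancel hlt.le]
  rw [← add_assoc, add_left_inj] at heq
  exact sub_eq_of_eq_add' heq

theorem ZMod.inv_natCast_mul_natCast_mul {q m : ℕ} (hm₀ : m ≠ 0) (hm : m < q.minFac)
    (g : ZMod q) : (m : ZMod q)⁻¹ * (m * g) = g := by
  rw [← mul_assoc, mul_comm _ (m : ZMod q),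
    ZMod.coe_mul_inv_eq_one m (Nat.coprime_of_lt_minFac hm₀ hm).symm, one_mul]

theorem card_lt_floor_inv_add_one_mul {M B : ℕ} {P : ℝ} (hP : 0 < P) (hM : 0 < M)
    (hB : (B : ℝ) = P * M) : M < (⌊P⁻¹⌋₊ + 1) * B := by
  have hB₀ : (0 : ℝ) < B := by rw [hB]; positivity
  have : (M : ℝ) < (⌊P⁻¹⌋₊ + 1) * B :=
    calc (M : ℝ) = P⁻¹ * B := by rw [hB]; field_simp
      _ < (⌊P⁻¹⌋₊ + 1) * B := by gcongr; exact Nat.lt_floor_add_one _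
  exact_mod_cast this

theorem stmt17_general (q k : ℕ) (hq : 0 < q)
    (A : Fin k → Finset (ZMod q)) (α : Fin k → ℝ)
    (hA : ∀ i, ((A i).card : ℝ) = α i * q) (hα : ∀ i, 0 < α i)
    (hmin : 2 * (∏ i, α i)⁻¹ + 3 < (q.minFac : ℝ)) :
    ∃ X : Finset (ZMod q), (X.card : ℝ) ≤ (∏ i, α i)⁻¹ + 1 ∧
      ∀ g : ZMod q, ∃ x ∈ X, ∃ d : ZMod q,
        (∀ i, ∃ a ∈ A i, ∃ a' ∈ A i, d = a - a') ∧ g = x * d := by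
  have : NeZero q := ⟨hq.ne'⟩
  set P := ∏ i, α i
  have hP : 0 < P := prod_pos fun i _ => hα i
  set N := ⌊P⁻¹⌋₊
  have hNP : (N : ℝ) ≤ P⁻¹ := Nat.floor_le (inv_pos.2 hP).le
  have hN : N < q.minFac := by exact_mod_cast (by linarith : (N : ℝ) < q.minFac)
  have hdensity : (#(Fintype.piFinset A) : ℝ) = P * Fintype.card (Fin k → ZMod q) := by
    simp [Fintype.card_piFinset, hA, P, prod_mul_distrib]
  have hcard := card_lt_floor_inv_add_one_mul hP Fintype.card_pos hdensity
  refine ⟨(Icc 1 N).image fun m : ℕ => (m : ZMod q)⁻¹, ?_, fun g => ?_⟩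
  · calc (#((Icc 1 N).image fun m : ℕ => (m : ZMod q)⁻¹) : ℝ) ≤ #(Icc 1 N) := by
          exact_mod_cast card_image_le
      _ ≤ P⁻¹ + 1 := by simp only [Nat.card_Icc, add_tsub_cancel_right]; linarith
  obtain ⟨m, hm, hmem⟩ := exists_nsmul_mem_sub_of_card_lt _ (fun _ => g) hcard
  rw [← Fintype.piFinset_sub, Fintype.mem_piFinset] at hmem
  rw [mem_Icc] at hm
  refine ⟨_, mem_image_of_mem _ (mem_Icc.2 hm), m * g, fun i => ?_,
    (ZMod.inv_natCast_mul_natCast_mul (by omega) (by omega) g).symm⟩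
  obtain ⟨a, ha, a', ha', h⟩ := mem_sub.1 (hmem i)
  exact ⟨a, ha, a', ha', by simpa [nsmul_eq_mul] using h.symm⟩

theorem stmt17 (q k : ℕ) (hq : 0 < q) (hk : 0 < k)
    (A : Fin k → Finset (ZMod q)) (α : Fin k → ℝ)
    (hA : ∀ i, ((A i).card : ℝ) = α i * q) (hα : ∀ i, 0 < α i)
    (hmin : 2 * (∏ i, α i)⁻¹ + 3 < (q.minFac : ℝ)) :
    ∃ X : Finset (ZMod q), (X.card : ℝ) ≤ (∏ i, α i)⁻¹ + 1 ∧
      ∀ g : ZMod q, ∃ x ∈ X, ∃ d : ZMod q,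
        (∀ i, ∃ a ∈ A i, ∃ a' ∈ A i, d = a - a') ∧ g = x * d :=
  stmt17_general q k hq A α hA hα hmin
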